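/- For every real number r > 1, let X_r = {f ∈ C[0,1] : f(0) = r·f(1)}, a closed subspace of the space C[0,1] of continuous real-valued functions on [0,1] with the supremum norm. Then t(X_r) = 1 + 1/r. -/

import Mathlib

/-- The thinness index `t(X)` of a normed space. -/
noncomputable def thinness (X : Type*) [NormedAddCommGroup X] : ℝ :=
  sInf {r : ℝ | 0 < r ∧ ∀ (n : ℕ) (x : Fin n → X), (∀ i, ‖x i‖ = 1) →
    ∀ ε : ℝ, 0 < ε → ∃ y : X, ‖y‖ = 1 ∧ ∀ i, ‖x i - y‖ < r + ε}

/-- The subspace `X_r = {f ∈ C[0,1] : f(0) = r f(1)}` of `C[0,1]`. -/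
def Xr (r : ℝ) : Subspace ℝ C(Set.Icc (0:ℝ) 1, ℝ) where
  carrier := {f | f ⟨0, by norm_num⟩ = r * f ⟨1, by norm_num⟩}
  zero_mem' := by simp
  add_mem' := by
    intro a b ha hb
    simp only [Set.mem_setOf_eq, ContinuousMap.add_apply] at *
    rw [ha, hb]; ring
  smul_mem' := by
    intro c f hf
    simp only [Set.mem_setOf_eq, ContinuousMap.smul_apply, smul_eq_mul] at *
    rw [hf]; ring

/-!
The unit vector `f t = 1 - (1 - 1/r) t` of `X_r` satisfies `f ≥ 1/r`; a unit vector `y`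
attains `±1` at some point, where one of `f`, `-f` has the opposite sign, so `y` is at
distance `≥ 1 + 1/r` from `f` or `-f`. Conversely, a unit vector `x` of `X_r` has
`|x(1)| = |x(0)|/r ≤ 1/r`, hence finitely many of them are all close to `[-1/r, 1/r]` near
`1`, and a nonnegative tent of height `1` supported there (vanishing at `0` and `1`, so
in `X_r`) is within `1 + 1/r + ε` of each of them.
-/

open Set Filter Topology

def IsThinnessBound (X : Type*) [NormedAddCommGroup X] (c : ℝ) : Prop :=
  ∀ (n : ℕ) (x : Fin n → X), (∀ i, ‖x i‖ = 1) →
    ∀ ε : ℝ, 0 < ε → ∃ y : X, ‖y‖ = 1 ∧ ∀ i, ‖x i - y‖ < c + ε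

theorem thinness_eq_of_isThinnessBound {X : Type*} [NormedAddCommGroup X] {c : ℝ}
    (hc : 0 < c) (hbound : IsThinnessBound X c) {n : ℕ} (x : Fin n → X)
    (hx : ∀ i, ‖x i‖ = 1) (hfar : ∀ y : X, ‖y‖ = 1 → ∃ i, c ≤ ‖x i - y‖) :
    thinness X = c := by
  refine le_antisymm (csInf_le ⟨0, fun s hs => hs.1.le⟩ ⟨hc, hbound⟩) ?_
  refine le_csInf ⟨c, hc, hbound⟩ fun s ⟨_, hs⟩ => ?_
  by_contra! hsc
  obtain ⟨y, hy, hclose⟩ := hs n x hx ((c - s) / 2) (by linarith)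
  obtain ⟨i, hi⟩ := hfar y hy
  linarith [hclose i]

namespace ContinuousMap

variable {K : Type*} [TopologicalSpace K] [CompactSpace K]

theorem exists_abs_apply_eq_norm [Nonempty K] (f : C(K, ℝ)) : ∃ t, |f t| = ‖f‖ := by
  obtain ⟨t₀, -, hmax⟩ := isCompact_univ.exists_isMaxOn univ_nonempty
    (continuous_abs.comp f.continuous).continuousOn
  exact ⟨t₀, le_antisymm (f.norm_coe_le_norm t₀)
    ((f.norm_le (abs_nonneg _)).2 fun t => hmax (mem_univ t))⟩

theorem norm_eq_one_of_abs_le_one {f : C(K, ℝ)} (hle : ∀ t, |f t| ≤ 1) (t₀ : K)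
    (ht₀ : |f t₀| = 1) : ‖f‖ = 1 :=
  le_antisymm ((f.norm_le zero_le_one).2 hle) (ht₀ ▸ f.norm_coe_le_norm t₀)

theorem one_add_le_norm_sub_or_norm_neg_sub {f y : C(K, ℝ)} {a : ℝ} (ha : 0 ≤ a)
    (hf : ∀ t, a ≤ f t) (hy : ‖y‖ = 1) : 1 + a ≤ ‖f - y‖ ∨ 1 + a ≤ ‖-f - y‖ := by
  have : Nonempty K := by
    by_contra hK
    rw [not_nonempty_iff] at hK
    simp [Subsingleton.elim y 0] at hy
  obtain ⟨t, ht⟩ := y.exists_abs_apply_eq_norm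
  have hft := hf t
  have h₁ := (f - y).norm_coe_le_norm t
  have h₂ := (-f - y).norm_coe_le_norm t
  simp only [coe_sub, coe_neg, Pi.sub_apply, Pi.neg_apply, Real.norm_eq_abs] at h₁ h₂
  rcases (abs_eq zero_le_one).1 (ht.trans hy) with hyt | hyt
  · right; rw [hyt, abs_of_nonpos (by linarith)] at h₂; linarith
  · left; rw [hyt, abs_of_nonneg (by linarith)] at h₁; linarith

theorem norm_sub_le_one_add {x y : C(K, ℝ)} {c : ℝ} (hc : 0 ≤ c) (hx : ‖x‖ ≤ 1)
    (hy : ∀ t, 0 ≤ y t ∧ y t ≤ 1) (hxy : ∀ t, y t = 0 ∨ |x t| ≤ c) : ‖x - y‖ ≤ 1 + c := by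
  refine ((x - y).norm_le (by linarith)).2 fun t => ?_
  have hxt : |x t| ≤ 1 := (x.norm_coe_le_norm t).trans hx
  rw [coe_sub, Pi.sub_apply, Real.norm_eq_abs, abs_le]
  rw [abs_le] at hxt
  obtain ⟨hy₀, hy₁⟩ := hy t
  rcases hxy t with hyt | hxt'
  · rw [hyt]; constructor <;> linarith
  · rw [abs_le] at hxt'; constructor <;> linarith

end ContinuousMap

local notation "C₀₁" => C(Icc (0:ℝ) 1, ℝ)

theorem mem_Xr {r : ℝ} {f : C₀₁} : f ∈ Xr r ↔ f 0 = r * f 1 := Iff.rfl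

theorem abs_apply_one_le_of_mem_Xr {r : ℝ} (hr : 0 < r) {f : C₀₁} (hf : f ∈ Xr r) :
    |f 1| ≤ ‖f‖ / r := by
  have h₀ := f.norm_coe_le_norm 0
  rw [mem_Xr.1 hf, Real.norm_eq_abs, abs_mul, abs_of_pos hr] at h₀
  rw [le_div_iff₀ hr]
  linarith

theorem exists_bump_near_one {δ : ℝ} (hδ : 0 < δ) (hδ₁ : δ ≤ 1) :
    ∃ y : C₀₁, y 0 = 0 ∧ y 1 = 0 ∧ ‖y‖ = 1 ∧ (∀ t, 0 ≤ y t ∧ y t ≤ 1) ∧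
      ∀ t : Icc (0:ℝ) 1, (t : ℝ) ≤ 1 - δ → y t = 0 := by
  let y : C₀₁ := ⟨fun t => max 0 (1 - 2 / δ * |(t : ℝ) - (1 - δ / 2)|), by fun_prop⟩
  have hbounds : ∀ t, 0 ≤ y t ∧ y t ≤ 1 := fun t =>
    ⟨le_max_left _ _, max_le zero_le_one (by simp only [sub_le_self_iff]; positivity)⟩
  have hvanish : ∀ t : Icc (0:ℝ) 1, δ / 2 ≤ |(t : ℝ) - (1 - δ / 2)| → y t = 0 := by
    intro t ht
    have : 2 / δ * (δ / 2) ≤ 2 / δ * |(t : ℝ) - (1 - δ / 2)| := by gcongr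
    rw [show 2 / δ * (δ / 2) = 1 by field_simp] at this
    exact max_eq_left (by linarith)
  have hpeak : y ⟨1 - δ / 2, by constructor <;> linarith⟩ = 1 := by simp [y]
  refine ⟨y, hvanish 0 ?_, hvanish 1 ?_, ?_, hbounds, fun t ht => hvanish t ?_⟩
  · rw [Icc.coe_zero, le_abs]; right; linarith
  · rw [Icc.coe_one, le_abs]; left; linarith
  · refine ContinuousMap.norm_eq_one_of_abs_le_one (fun t => ?_) _ (by rw [hpeak, abs_one])
    rw [abs_le]; constructor <;> linarith [hbounds t]
  · rw [le_abs]; right; linarith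

theorem isThinnessBound_Xr {r : ℝ} (hr : 0 < r) : IsThinnessBound (Xr r) (1 + 1 / r) := by
  intro n x hx ε hε
  have hnear : ∀ᶠ t in 𝓝 (1 : Icc (0:ℝ) 1), ∀ i, |(x i : C₀₁) t - (x i : C₀₁) 1| < ε / 2 :=
    eventually_all.2 fun i => by
      simpa only [Metric.mem_ball, Real.dist_eq] using
        (x i : C₀₁).continuous.continuousAt.eventually (Metric.ball_mem_nhds _ (half_pos hε))
  obtain ⟨δ, hδ, hδnear⟩ := Metric.eventually_nhds_iff.1 hnear
  obtain ⟨y, hy₀, hy₁, hynorm, hybounds, hysupp⟩ :=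
    exists_bump_near_one (lt_min hδ one_pos) (min_le_right δ 1)
  have hyX : y ∈ Xr r := by rw [mem_Xr, hy₀, hy₁, mul_zero]
  refine ⟨⟨y, hyX⟩, hynorm, fun i => ?_⟩
  have hxi : ‖(x i : C₀₁)‖ = 1 := hx i
  have hxi₁ := abs_apply_one_le_of_mem_Xr hr (x i).2
  rw [hxi] at hxi₁
  have : ‖(x i : C₀₁) - y‖ ≤ 1 + (1 / r + ε / 2) := by
    refine ContinuousMap.norm_sub_le_one_add (by positivity) hxi.le hybounds fun t => ?_
    rcases le_or_gt (t : ℝ) (1 - min δ 1) with ht | ht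
    · exact .inl (hysupp t ht)
    · have hdist : dist t 1 < δ := by
        rw [Subtype.dist_eq, Real.dist_eq, Icc.coe_one, abs_of_nonpos (by linarith [t.2.2])]
        linarith [min_le_left δ 1]
      refine .inr ?_
      linarith [hδnear hdist i, abs_sub_abs_le_abs_sub ((x i : C₀₁) t) ((x i : C₀₁) 1)]
  change ‖(x i : C₀₁) - y‖ < 1 + 1 / r + ε
  linarith

theorem exists_mem_Xr_norm_eq_one_forall_ge {r : ℝ} (hr : 1 < r) :
    ∃ f ∈ Xr r, ‖f‖ = 1 ∧ ∀ t, 1 / r ≤ f t := by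
  have hr₀ : 0 < r := by linarith
  have hslope : 0 ≤ 1 - 1 / r := by rw [sub_nonneg, div_le_one hr₀]; exact hr.le
  let f : C₀₁ := ⟨fun t => 1 - (1 - 1 / r) * t, by fun_prop⟩
  have hf : ∀ t, 1 / r ≤ f t ∧ f t ≤ 1 := fun t => by
    obtain ⟨ht₀, ht₁⟩ := t.2
    constructor <;> dsimp [f] <;> nlinarith
  refine ⟨f, ?_, ?_, fun t => (hf t).1⟩
  · rw [mem_Xr]
    simp only [f, ContinuousMap.coe_mk, Icc.coe_zero, Icc.coe_one, mul_zero, mul_one, sub_zero,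
      sub_sub_cancel]
    field_simp
  · refine ContinuousMap.norm_eq_one_of_abs_le_one (fun t => ?_) 0 (by simp [f])
    rw [abs_le]; constructor <;> linarith [hf t, one_div_pos.2 hr₀]

/-- For every `r > 1`, the space `X_r = {f ∈ C[0,1] : f(0) = r f(1)}` satisfies
`t(X_r) = 1 + 1/r`. -/
theorem thinness_Xr (r : ℝ) (hr : 1 < r) : thinness (Xr r) = 1 + 1 / r := by
  have hr₀ : 0 < r := by linarith
  obtain ⟨f, hfX, hfnorm, hf⟩ := exists_mem_Xr_norm_eq_one_forall_ge hr
  let g : Xr r := ⟨f, hfX⟩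
  refine thinness_eq_of_isThinnessBound (by positivity) (isThinnessBound_Xr hr₀) ![g, -g] ?_ ?_
  · intro i
    fin_cases i
    exacts [hfnorm, (norm_neg g).trans hfnorm]
  · intro y hy
    rcases ContinuousMap.one_add_le_norm_sub_or_norm_neg_sub (by positivity) hf hy with h | h
    exacts [⟨0, h⟩, ⟨1, h⟩]
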